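/- If (A) and the finite MSP hold, then for every finite subset A ⊆ Σ, λ(A) = Ā, i.e., the λ-closure of a finite set equals its set of superpositions. -/

import Mathlib

universe u v

/-- A state property system: states, a complete lattice of properties, and
the actuality map `xi` assigning to each state the set of actual properties. -/
structure SPS (σ : Type u) (L : Type v) [CompleteLattice L] where
  xi : σ → Set L
  top_mem : ∀ p, ⊤ ∈ xi p
  bot_not_mem : ∀ p, ⊥ ∉ xi p
  sInf_mem : ∀ (p : σ) (A : Set L), (∀ a ∈ A, a ∈ xi p) ↔ sInf A ∈ xi p
  le_iff : ∀ a b : L, a ≤ b ↔ ∀ r, a ∈ xi r → b ∈ xi r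

variable {σ : Type u} {L : Type v} [CompleteLattice L]

/-- λ{p,q} : the set of superpositions of the pair p, q. -/
def SPS.lamPair (S : SPS σ L) (p q : σ) : Set σ := {s | S.xi p ∩ S.xi q ⊆ S.xi s}

/-- A set is λ-closed if it contains λ{p,q} for each pair of its points. -/
def SPS.lamClosed (S : SPS σ L) (T : Set σ) : Prop :=
  ∀ p ∈ T, ∀ q ∈ T, S.lamPair p q ⊆ T

/-- λ(P) : the intersection of all λ-closed sets containing P. -/
def SPS.lam (S : SPS σ L) (P : Set σ) : Set σ :=
  ⋂₀ {G | S.lamClosed G ∧ P ⊆ G}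

/-- The set of superpositions of a set of states. -/
def SPS.bar (S : SPS σ L) (T : Set σ) : Set σ :=
  {p | (⋂ s ∈ T, S.xi s) ⊆ S.xi p}

/-- Property (A): at least two states and `xi` order-reflecting (injective). -/
def SPS.propA (S : SPS σ L) : Prop :=
  (∃ p q : σ, p ≠ q) ∧ ∀ p q : σ, S.xi p ⊆ S.xi q → p = q

/-- p is a minimal superposition of A. -/
def SPS.minSup (S : SPS σ L) (A : Set σ) (p : σ) : Prop :=
  p ∈ S.bar A ∧ ∀ Q : Set σ, Q ⊂ A → p ∉ S.bar Q

/-- The minimal superposition principle for a given set A. -/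
def SPS.MSPon (S : SPS σ L) (A : Set σ) : Prop :=
  ∀ p : σ, S.minSup A p →
    ∀ S₁ S₂ : Set σ, S₁ ⊂ A → S₂ ⊂ A → S₁ ∩ S₂ = ∅ → S₁ ∪ S₂ = A →
      (S.bar (S₁ ∪ {p}) ∩ S.bar S₂).Nonempty

/-- n-MSP : MSP for all sets of cardinality at most n. -/
def SPS.nMSP (S : SPS σ L) (n : ℕ) : Prop :=
  ∀ A : Set σ, A.Finite → A.ncard ≤ n → S.MSPon A

/-- f-MSP : MSP for all finite sets. -/
def SPS.fMSP (S : SPS σ L) : Prop := ∀ A : Set σ, A.Finite → S.MSPon A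

/-! `Ā` is λ-closed and contains `A`, so `λ(A) ⊆ Ā`. Conversely, by induction on `|A|` it suffices
to treat a minimal superposition `p ∉ A` of `A`. For `a ∈ A`, MSP for the partition `{a}, A ∖ {a}`
gives `r ∈ {a, p}⁻ ∩ (A ∖ {a})⁻`, and minimality of `p` makes `r` a minimal superposition of
`{a, p}`. MSP for `{a}, {p}` then yields `p ∈ {a, r}⁻ = λ{a, r}`, where `r ∈ λ(A ∖ {a})` by
induction. -/

namespace SPS

variable (S : SPS σ L)

lemma subset_bar (A : Set σ) : A ⊆ S.bar A := fun _ hs _ hx =>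
  Set.mem_iInter₂.mp hx _ hs

lemma bar_subset_bar_of_subset_bar {A B : Set σ} (h : A ⊆ S.bar B) : S.bar A ⊆ S.bar B :=
  fun _ hp _ hx => hp (Set.mem_iInter₂.mpr fun _ hs => h hs hx)

lemma bar_empty : S.bar (∅ : Set σ) = ∅ :=
  Set.eq_empty_of_forall_notMem fun p hp => S.bot_not_mem p (hp (by simp))

lemma bar_singleton (hinj : ∀ p q : σ, S.xi p ⊆ S.xi q → p = q) (q : σ) :
    S.bar {q} = {q} := by
  ext x
  change (⋂ s ∈ ({q} : Set σ), S.xi s) ⊆ S.xi x ↔ x = q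
  rw [Set.biInter_singleton]
  exact ⟨fun h => (hinj q x h).symm, fun h => h ▸ subset_rfl⟩

lemma bar_pair (a b : σ) : S.bar {a, b} = S.lamPair a b := by
  ext x
  simp [bar, lamPair]

lemma subset_lam (A : Set σ) : A ⊆ S.lam A := fun _ hx =>
  Set.mem_sInter.mpr fun _ hG => hG.2 hx

lemma lam_mono {A B : Set σ} (h : A ⊆ B) : S.lam A ⊆ S.lam B := fun _ hx =>
  Set.mem_sInter.mpr fun G hG => Set.mem_sInter.mp hx G ⟨hG.1, h.trans hG.2⟩

lemma lamClosed_lam (A : Set σ) : S.lamClosed (S.lam A) := fun p hp q hq _ hs =>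
  Set.mem_sInter.mpr fun G hG =>
    hG.1 p (Set.mem_sInter.mp hp G hG) q (Set.mem_sInter.mp hq G hG) hs

lemma lamClosed_bar (A : Set σ) : S.lamClosed (S.bar A) := fun _ hp _ hq _ hs _ hx =>
  hs ⟨hp hx, hq hx⟩

lemma lam_subset_bar (A : Set σ) : S.lam A ⊆ S.bar A :=
  Set.sInter_subset_of_mem ⟨S.lamClosed_bar A, S.subset_bar A⟩

lemma minSup_pair (hinj : ∀ p q : σ, S.xi p ⊆ S.xi q → p = q) {a b r : σ}
    (hr : r ∈ S.bar {a, b}) (hra : r ≠ a) (hrb : r ≠ b) : S.minSup {a, b} r := by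
  refine ⟨hr, fun Q hQ hrQ => ?_⟩
  rcases Set.subset_pair_iff_eq.mp hQ.subset with rfl | rfl | rfl | rfl
  · simp [bar_empty] at hrQ
  · exact hra (by simpa [S.bar_singleton hinj] using hrQ)
  · exact hrb (by simpa [S.bar_singleton hinj] using hrQ)
  · exact hQ.ne rfl

lemma mem_lamPair_of_minSup_pair (hinj : ∀ p q : σ, S.xi p ⊆ S.xi q → p = q) {a p r : σ}
    (hMSP : S.MSPon {a, p}) (hap : a ≠ p) (hr : S.minSup {a, p} r) : p ∈ S.lamPair a r := by
  have hdisj : ({a} : Set σ) ∩ {p} = ∅ := Set.singleton_inter_eq_empty.mpr hap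
  have ha : ({a} : Set σ) ⊂ {a, p} :=
    Set.pair_comm p a ▸ Set.ssubset_insert (by simpa using hap.symm)
  have hp : ({p} : Set σ) ⊂ {a, p} := Set.ssubset_insert (by simpa using hap)
  obtain ⟨t, hta, htp⟩ := hMSP r hr {a} {p} ha hp hdisj Set.singleton_union
  rw [S.bar_singleton hinj, Set.mem_singleton_iff] at htp
  rw [← S.bar_pair, ← Set.singleton_union, ← htp]
  exact hta

lemma exists_mem_bar_diff_mem_lamPair (hinj : ∀ p q : σ, S.xi p ⊆ S.xi q → p = q)
    (hf : S.fMSP) {A : Set σ} (hA : A.Finite) {a p : σ} (hp : S.minSup A p) (hpA : p ∉ A)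
    (ha : a ∈ A) : ∃ r ∈ S.bar (A \ {a}), p ∈ S.lamPair a r := by
  have hAa : A ≠ {a} := by
    rintro rfl
    exact hpA (S.bar_singleton hinj a ▸ hp.1)
  have h₁ : ({a} : Set σ) ⊂ A := (Set.singleton_subset_iff.mpr ha).ssubset_of_ne hAa.symm
  have h₂ : A \ {a} ⊂ A := Set.sdiff_singleton_ssubset.mpr ha
  obtain ⟨r, hr, hrA⟩ := hf A hA p hp {a} (A \ {a}) h₁ h₂ (by simp)
    (Set.union_sdiff_cancel h₁.subset)
  have hp' : p ∉ S.bar (A \ {a}) := hp.2 _ h₂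
  have hrp : r ≠ p := by
    rintro rfl
    exact hp' hrA
  have hra : r ≠ a := by
    rintro rfl
    refine hp' (S.bar_subset_bar_of_subset_bar (fun s hs => ?_) hp.1)
    by_cases hsr : s = r
    · exact hsr ▸ hrA
    · exact S.subset_bar _ ⟨hs, hsr⟩
  have hap : a ≠ p := fun h => hpA (h ▸ ha)
  rw [Set.singleton_union] at hr
  exact ⟨r, hrA, S.mem_lamPair_of_minSup_pair hinj (hf _ (Set.toFinite _)) hap
    (S.minSup_pair hinj hr hra hrp)⟩

lemma bar_subset_lam (hinj : ∀ p q : σ, S.xi p ⊆ S.xi q → p = q) (hf : S.fMSP) {A : Set σ}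
    (hA : A.Finite) : S.bar A ⊆ S.lam A := by
  induction hn : A.ncard using Nat.strong_induction_on generalizing A with
  | _ n ih =>
  have ih' : ∀ B ⊂ A, S.bar B ⊆ S.lam A := fun B hB =>
    (ih _ (hn ▸ Set.ncard_lt_ncard hB hA) (hA.subset hB.subset) rfl).trans (S.lam_mono hB.subset)
  intro p hp
  by_cases hmin : S.minSup A p
  swap
  · obtain ⟨B, hB, hpB⟩ : ∃ B ⊂ A, p ∈ S.bar B := by simpa [minSup, hp] using hmin
    exact ih' B hB hpB
  by_cases hpA : p ∈ A
  · exact S.subset_lam A hpA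
  obtain ⟨a, ha⟩ : A.Nonempty := Set.nonempty_iff_ne_empty.mpr <| by
    rintro rfl
    simp [bar_empty] at hp
  obtain ⟨r, hr, hpr⟩ := S.exists_mem_bar_diff_mem_lamPair hinj hf hA hmin hpA ha
  have hrA : r ∈ S.lam A := ih' _ (Set.sdiff_singleton_ssubset.mpr ha) hr
  exact S.lamClosed_lam A a (S.subset_lam A ha) r hrA hpr

end SPS

theorem stmt7 (S : SPS σ L) (hA : S.propA) (hf : S.fMSP) :
    ∀ A : Set σ, A.Finite → S.lam A = S.bar A := fun _ hfin =>
  (S.lam_subset_bar _).antisymm (S.bar_subset_lam hA.2 hf hfin)
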